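/- Let (X,d) be a complete CAT(0) space and A ⊆ X a closed and convex subset. If A contains a directional sequence, then A contains a geodesic ray. -/

import Mathlib

open Set Filter Metric

section Defs

variable {X : Type*} [MetricSpace X]

/-- A unit-speed geodesic defined on `[a, b]`. -/
def IsGeodesicOn (γ : ℝ → X) (a b : ℝ) : Prop :=
  ∀ s ∈ Set.Icc a b, ∀ t ∈ Set.Icc a b, dist (γ s) (γ t) = |s - t|

/-- `S` is a geodesic segment joining `x` and `y`. -/
def IsGeodesicSegment (S : Set X) (x y : X) : Prop :=
  ∃ (a b : ℝ) (γ : ℝ → X), a ≤ b ∧ IsGeodesicOn γ a b ∧ γ a = x ∧ γ b = y ∧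
    S = γ '' Set.Icc a b

/-- A geodesic space: every two points are joined by a geodesic segment. -/
def GeodesicSpace (X : Type*) [MetricSpace X] : Prop :=
  ∀ x y : X, ∃ S : Set X, IsGeodesicSegment S x y

/-- A uniquely geodesic space. -/
def UniquelyGeodesic (X : Type*) [MetricSpace X] : Prop :=
  ∀ x y : X, ∃! S : Set X, IsGeodesicSegment S x y

/-- `S` is contained in the closed `M`-neighborhood of `T`. -/
def InClosedNbhd (S T : Set X) (M : ℝ) : Prop :=
  ∀ p ∈ S, ∃ q ∈ T, dist p q ≤ M

/-- A triangle with sides `S1, S2, S3` is `M`-slim. -/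
def SlimTriangle (S1 S2 S3 : Set X) (M : ℝ) : Prop :=
  InClosedNbhd S1 (S2 ∪ S3) M ∧ InClosedNbhd S2 (S1 ∪ S3) M ∧ InClosedNbhd S3 (S1 ∪ S2) M

/-- `X` is `δ`-hyperbolic: every geodesic triangle is `δ`-slim. -/
def DeltaHyperbolic (X : Type*) [MetricSpace X] (δ : ℝ) : Prop :=
  ∀ x y z : X, ∀ S1 S2 S3 : Set X,
    IsGeodesicSegment S1 x y → IsGeodesicSegment S2 y z → IsGeodesicSegment S3 z x →
    SlimTriangle S1 S2 S3 δ

/-- A geodesic ray `γ : [0, ∞) → X`. -/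
def IsGeodesicRay (γ : ℝ → X) : Prop :=
  ∀ s ∈ Set.Ici (0:ℝ), ∀ t ∈ Set.Ici (0:ℝ), dist (γ s) (γ t) = |s - t|

/-- A set is geodesically bounded if it contains no geodesic ray. -/
def GeodesicallyBounded (A : Set X) : Prop :=
  ¬ ∃ γ : ℝ → X, IsGeodesicRay γ ∧ ∀ t ∈ Set.Ici (0:ℝ), γ t ∈ A

/-- A directional curve `γ : [0, ∞) → X` (with some constant `b ≥ 0`). -/
def IsDirectionalCurve (γ : ℝ → X) : Prop :=
  ∃ b : ℝ, 0 ≤ b ∧ ∀ s ∈ Set.Ici (0:ℝ), ∀ t ∈ Set.Ici (0:ℝ),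
    |s - t| - b ≤ dist (γ s) (γ t) ∧ dist (γ s) (γ t) ≤ |s - t|

/-- A set is directionally bounded if it contains no directional curve. -/
def DirectionallyBounded (A : Set X) : Prop :=
  ¬ ∃ γ : ℝ → X, IsDirectionalCurve γ ∧ ∀ t ∈ Set.Ici (0:ℝ), γ t ∈ A

/-- A subset of a geodesic space is convex if every geodesic segment joining two of its
points is contained in it. -/
def GeodesicConvex (A : Set X) : Prop :=
  ∀ x ∈ A, ∀ y ∈ A, ∀ S : Set X, IsGeodesicSegment S x y → S ⊆ A

/-- The comparison point in the Euclidean plane: the point on the segment from `x'` to `y'`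
(of length `L`) at distance `t` from `x'`. -/
noncomputable def cmpPt (x' y' : EuclideanSpace ℝ (Fin 2)) (L t : ℝ) :
    EuclideanSpace ℝ (Fin 2) :=
  AffineMap.lineMap x' y' (t / L)

/-- `X` is a CAT(0) space: it is geodesic and for every geodesic triangle and every
comparison triangle in the Euclidean plane, distances between points on the triangle are
bounded by the distances between the corresponding comparison points. -/
def CAT0Space (X : Type*) [MetricSpace X] : Prop :=
  GeodesicSpace X ∧
  ∀ (x y z : X) (γ1 γ2 γ3 : ℝ → X),
    IsGeodesicOn γ1 0 (dist x y) → γ1 0 = x → γ1 (dist x y) = y →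
    IsGeodesicOn γ2 0 (dist y z) → γ2 0 = y → γ2 (dist y z) = z →
    IsGeodesicOn γ3 0 (dist z x) → γ3 0 = z → γ3 (dist z x) = x →
    ∀ x' y' z' : EuclideanSpace ℝ (Fin 2),
      dist x' y' = dist x y → dist y' z' = dist y z → dist z' x' = dist z x →
      (∀ s ∈ Set.Icc (0:ℝ) (dist x y), ∀ t ∈ Set.Icc (0:ℝ) (dist y z),
        dist (γ1 s) (γ2 t) ≤ dist (cmpPt x' y' (dist x y) s) (cmpPt y' z' (dist y z) t)) ∧
      (∀ s ∈ Set.Icc (0:ℝ) (dist y z), ∀ t ∈ Set.Icc (0:ℝ) (dist z x),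
        dist (γ2 s) (γ3 t) ≤ dist (cmpPt y' z' (dist y z) s) (cmpPt z' x' (dist z x) t)) ∧
      (∀ s ∈ Set.Icc (0:ℝ) (dist z x), ∀ t ∈ Set.Icc (0:ℝ) (dist x y),
        dist (γ3 s) (γ1 t) ≤ dist (cmpPt z' x' (dist z x) s) (cmpPt x' y' (dist x y) t))

/-- Busemann convexity. -/
def BusemannConvex (X : Type*) [MetricSpace X] : Prop :=
  GeodesicSpace X ∧
  ∀ (a b c d : ℝ) (γ σ : ℝ → X), a ≤ b → c ≤ d →
    IsGeodesicOn γ a b → IsGeodesicOn σ c d →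
    ∀ t ∈ Set.Icc (0:ℝ) 1,
      dist (γ ((1-t)*a + t*b)) (σ ((1-t)*c + t*d)) ≤
        (1-t) * dist (γ a) (σ c) + t * dist (γ b) (σ d)

/-- A `(lam, eps)`-quasi-geodesic defined on `[a, b]`. -/
def IsQuasiGeodesicOn (lam eps : ℝ) (γ : ℝ → X) (a b : ℝ) : Prop :=
  ∀ s ∈ Set.Icc a b, ∀ t ∈ Set.Icc a b,
    (1/lam) * |s - t| - eps ≤ dist (γ s) (γ t) ∧ dist (γ s) (γ t) ≤ lam * |s - t| + eps

/-- A `(lam, eps)`-quasi-geodesic ray. -/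
def IsQuasiGeodesicRay (lam eps : ℝ) (γ : ℝ → X) : Prop :=
  ∀ s ∈ Set.Ici (0:ℝ), ∀ t ∈ Set.Ici (0:ℝ),
    (1/lam) * |s - t| - eps ≤ dist (γ s) (γ t) ∧ dist (γ s) (γ t) ≤ lam * |s - t| + eps

/-- A `k`-local `lam`-quasi-geodesic ray: a `(lam, eps)`-quasi-geodesic ray locally,
for every `eps > 0`. -/
def IsLocalQuasiGeodesicRay (k lam : ℝ) (γ : ℝ → X) : Prop :=
  ∀ eps > (0:ℝ), ∀ s ∈ Set.Ici (0:ℝ), ∀ t ∈ Set.Ici (0:ℝ), |s - t| ≤ k →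
    (1/lam) * |s - t| - eps ≤ dist (γ s) (γ t) ∧ dist (γ s) (γ t) ≤ lam * |s - t| + eps

/-- `S` is the image of a `lam`-quasi-geodesic joining `x` and `y`
(i.e. a `(lam, eps)`-quasi-geodesic for every `eps > 0`). -/
def IsQuasiGeodesicSegment (lam : ℝ) (S : Set X) (x y : X) : Prop :=
  ∃ (a b : ℝ) (γ : ℝ → X), a ≤ b ∧ (∀ eps > (0:ℝ), IsQuasiGeodesicOn lam eps γ a b) ∧
    γ a = x ∧ γ b = y ∧ S = γ '' Set.Icc a b

/-- Every `lam`-quasi-geodesic triangle in `X` is `M`-slim. -/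
def QuasiGeodesicTrianglesSlim (X : Type*) [MetricSpace X] (lam M : ℝ) : Prop :=
  ∀ x y z : X, ∀ S1 S2 S3 : Set X,
    IsQuasiGeodesicSegment lam S1 x y → IsQuasiGeodesicSegment lam S2 y z →
    IsQuasiGeodesicSegment lam S3 z x → SlimTriangle S1 S2 S3 M

/-- A play of the Lion-Man game in `A` with speed `D`. -/
def IsLionManPlay (A : Set X) (D : ℝ) (L M : ℕ → X) : Prop :=
  (∀ n, L n ∈ A) ∧ (∀ n, M n ∈ A) ∧
  (∀ n, ∃ S : Set X, IsGeodesicSegment S (L n) (M n) ∧ L (n+1) ∈ S) ∧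
  (∀ n, dist (L n) (L (n+1)) = min D (dist (L n) (M n))) ∧
  (∀ n, dist (M n) (M (n+1)) ≤ D)

/-- The lion wins a play if `d(L_{n+1}, M_n) → 0`. -/
def LionWins (L M : ℕ → X) : Prop :=
  Filter.Tendsto (fun n => dist (L (n+1)) (M n)) Filter.atTop (nhds 0)

/-- The lion always wins the Lion-Man game played in `A`. -/
def LionAlwaysWins (A : Set X) : Prop :=
  ∀ D > (0:ℝ), ∀ L M : ℕ → X, IsLionManPlay A D L M → LionWins L M

end Defs

/-- A directional sequence: `d(x₀, x_n) → ∞` and there is `b ≥ 0` such that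
`d(x_{n₁}, x_{n_l}) ≥ ∑_{i=1}^{l-1} d(x_{n_i}, x_{n_{i+1}}) - b` for all
increasing finite families of indices `n₁ < n₂ < ⋯ < n_l`. -/
def IsDirectionalSeq {X : Type*} [MetricSpace X] (x : ℕ → X) : Prop :=
  Filter.Tendsto (fun n => dist (x 0) (x n)) Filter.atTop Filter.atTop ∧
  ∃ b : ℝ, 0 ≤ b ∧ ∀ (l : ℕ) (n : Fin (l + 1) → ℕ), StrictMono n →
    dist (x (n 0)) (x (n (Fin.last l))) ≥
      (∑ i : Fin l, dist (x (n i.castSucc)) (x (n i.succ))) - b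

/-!
Let `gₙ` be the geodesic from `x₀` to `xₙ`. For `m < n` the directional inequality says that the
triangle `x₀ xₘ xₙ` is nearly degenerate: `d(x₀, xₘ) + d(xₘ, xₙ) - d(x₀, xₙ) ≤ b`. Comparing with a
Euclidean triangle, the CAT(0) inequality then gives `d(gₘ t, gₙ t)² ≤ 2 t² b / d(x₀, xₘ)`, which
tends to `0` since `d(x₀, xₘ) → ∞`. Hence `gₙ t` converges for every `t ≥ 0`; the limit curve is a
geodesic ray as a pointwise limit of geodesics, and it lies in `A` because `A` is convex and closed.
-/

open Topology

section Geodesics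

variable {X : Type*} [MetricSpace X]

theorem IsGeodesicOn.reverse {g : ℝ → X} {L : ℝ} (hg : IsGeodesicOn g 0 L) :
    IsGeodesicOn (fun s => g (L - s)) 0 L := by
  intro s hs t ht
  rw [hg (L - s) ⟨by linarith [hs.2], by linarith [hs.1]⟩ (L - t)
    ⟨by linarith [ht.2], by linarith [ht.1]⟩, ← abs_neg]
  ring_nf

theorem IsGeodesicSegment.exists_isGeodesicOn {S : Set X} {x y : X}
    (hS : IsGeodesicSegment S x y) :
    ∃ g : ℝ → X, IsGeodesicOn g 0 (dist x y) ∧ g 0 = x ∧ g (dist x y) = y ∧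
      MapsTo g (Icc 0 (dist x y)) S := by
  obtain ⟨a, c, γ, hac, hγ, hγa, hγc, rfl⟩ := hS
  have hxy : dist x y = c - a := by
    rw [← hγa, ← hγc, hγ a ⟨le_rfl, hac⟩ c ⟨hac, le_rfl⟩, abs_sub_comm, abs_of_nonneg (by linarith)]
  refine ⟨fun s => γ (a + s), ?_, by simpa using hγa, by simpa [hxy] using hγc, ?_⟩
  · intro s hs t ht
    rw [hxy] at hs ht
    simpa using hγ (a + s) ⟨by linarith [hs.1], by linarith [hs.2]⟩ (a + t)
      ⟨by linarith [ht.1], by linarith [ht.2]⟩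
  · intro s hs
    rw [hxy] at hs
    exact ⟨a + s, ⟨by linarith [hs.1], by linarith [hs.2]⟩, rfl⟩

theorem GeodesicConvex.exists_isGeodesicOn (hX : GeodesicSpace X) {A : Set X}
    (hA : GeodesicConvex A) {x y : X} (hx : x ∈ A) (hy : y ∈ A) :
    ∃ g : ℝ → X, IsGeodesicOn g 0 (dist x y) ∧ g 0 = x ∧ g (dist x y) = y ∧
      MapsTo g (Icc 0 (dist x y)) A := by
  obtain ⟨S, hS⟩ := hX x y
  obtain ⟨g, hg, hg0, hg1, hgS⟩ := hS.exists_isGeodesicOn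
  exact ⟨g, hg, hg0, hg1, hgS.mono_right (hA x hx y hy S hS)⟩

theorem isGeodesicRay_of_tendsto {g : ℕ → ℝ → X} {d : ℕ → ℝ} {γ : ℝ → X}
    (hg : ∀ n, IsGeodesicOn (g n) 0 (d n)) (hd : Tendsto d atTop atTop)
    (hγ : ∀ t ∈ Ici (0 : ℝ), Tendsto (fun n => g n t) atTop (𝓝 (γ t))) :
    IsGeodesicRay γ := by
  intro s hs t ht
  have hdist : ∀ᶠ n in atTop, dist (g n s) (g n t) = |s - t| := by
    filter_upwards [hd.eventually_ge_atTop (max s t)] with n hn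
    exact hg n s ⟨hs, (le_max_left s t).trans hn⟩ t ⟨ht, (le_max_right s t).trans hn⟩
  exact tendsto_nhds_unique ((hγ s hs).dist (hγ t ht))
    (tendsto_const_nhds.congr' (hdist.mono fun _ h => h.symm))

end Geodesics

theorem exists_comparison_triangle {X : Type*} [MetricSpace X] {x y : X} (z : X)
    (hxy : x ≠ y) :
    ∃ a b c : EuclideanSpace ℝ (Fin 2),
      dist a b = dist x y ∧ dist b c = dist y z ∧ dist c a = dist z x := by
  have h₁ : dist z x ≤ dist x y + dist y z := by
    linarith [dist_triangle z y x, dist_comm y x, dist_comm z y]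
  have h₂ : dist y z ≤ dist x y + dist z x := by
    linarith [dist_triangle y x z, dist_comm y x, dist_comm x z]
  have h₃ : dist x y ≤ dist y z + dist z x := by
    linarith [dist_triangle x z y, dist_comm z y, dist_comm x z]
  have hp : 0 < dist x y := dist_pos.2 hxy
  set p := dist x y
  set q := dist y z
  set r := dist z x
  -- `c = (u, v)`, with `u` given by the law of cosines
  obtain ⟨u, hu⟩ : ∃ u, 2 * p * u = p ^ 2 + r ^ 2 - q ^ 2 := ⟨_, mul_div_cancel₀ _ (by positivity)⟩
  have hur : u ^ 2 ≤ r ^ 2 := by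
    have h : (2 * p) ^ 2 * u ^ 2 ≤ (2 * p) ^ 2 * r ^ 2 := by
      rw [← mul_pow, hu]
      nlinarith [mul_nonneg (mul_nonneg (sub_nonneg.2 h₁) (sub_nonneg.2 h₂))
        (mul_nonneg (sub_nonneg.2 h₃) (by positivity : 0 ≤ p + q + r))]
    exact le_of_mul_le_mul_left h (by positivity)
  set v := Real.sqrt (r ^ 2 - u ^ 2)
  have hv : v ^ 2 = r ^ 2 - u ^ 2 := Real.sq_sqrt (by linarith)
  refine ⟨!₂[0, 0], !₂[p, 0], !₂[u, v], ?_, ?_, ?_⟩ <;>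
    simp only [EuclideanSpace.dist_eq, Fin.sum_univ_two, Matrix.cons_val_zero, Matrix.cons_val_one,
      Real.dist_eq, sq_abs]
  · rw [show (0 - p) ^ 2 + (0 - 0 : ℝ) ^ 2 = p ^ 2 by ring]
    exact Real.sqrt_sq dist_nonneg
  · rw [show (p - u) ^ 2 + (0 - v) ^ 2 = q ^ 2 by nlinarith]
    exact Real.sqrt_sq dist_nonneg
  · rw [show (u - 0) ^ 2 + (v - 0) ^ 2 = r ^ 2 by nlinarith]
    exact Real.sqrt_sq dist_nonneg

theorem dist_cmpPt_sq {a b c : EuclideanSpace ℝ (Fin 2)} {p q r : ℝ} (t : ℝ) (hp : p ≠ 0)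
    (hr : r ≠ 0) (hab : dist a b = p) (hbc : dist b c = q) (hca : dist c a = r) :
    dist (cmpPt c a r (r - t)) (cmpPt a b p t) ^ 2 = t ^ 2 * (q ^ 2 - (p - r) ^ 2) / (p * r) := by
  have hca' : ‖c - a‖ = r := by rw [← dist_eq_norm, hca]
  have hba : ‖b - a‖ = p := by rw [← dist_eq_norm, dist_comm, hab]
  have hinner : inner ℝ (c - a) (b - a) = (r ^ 2 + p ^ 2 - q ^ 2) / 2 := by
    have h := norm_sub_sq_real (c - a) (b - a)
    rw [sub_sub_sub_cancel_right, ← dist_eq_norm, dist_comm, hbc, hca', hba] at h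
    linarith
  have hdiff : cmpPt c a r (r - t) - cmpPt a b p t = (t / r) • (c - a) - (t / p) • (b - a) := by
    simp only [cmpPt, AffineMap.lineMap_apply_module]
    rw [show (r - t) / r = 1 - t / r by field_simp]
    module
  rw [dist_eq_norm, hdiff, norm_sub_sq_real, norm_smul, norm_smul, real_inner_smul_left,
    real_inner_smul_right, hinner, mul_pow, mul_pow, Real.norm_eq_abs, Real.norm_eq_abs, sq_abs,
    sq_abs, hca', hba]
  field_simp
  ring

theorem dist_cmpPt_sq_le {a b c : EuclideanSpace ℝ (Fin 2)} {p q r t : ℝ} (hp : 0 < p)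
    (hr : 0 < r) (hab : dist a b = p) (hbc : dist b c = q) (hca : dist c a = r) :
    dist (cmpPt c a r (r - t)) (cmpPt a b p t) ^ 2 ≤ 2 * t ^ 2 * (p + q - r) / p := by
  have h₁ : r ≤ p + q := by linarith [dist_triangle c b a, dist_comm c b, dist_comm b a]
  have h₂ : q ≤ p + r := by linarith [dist_triangle b a c, dist_comm b a, dist_comm a c]
  rw [dist_cmpPt_sq t hp.ne' hr.ne' hab hbc hca, div_le_div_iff₀ (by positivity) hp]
  -- `q² - (p - r)² = (q - p + r) (p + q - r)` and `0 ≤ q - p + r ≤ 2 r`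
  nlinarith [mul_le_mul_of_nonneg_left (mul_le_mul_of_nonneg_right (by linarith : q - p + r ≤ 2 * r)
    (sub_nonneg.2 h₁)) (mul_nonneg (sq_nonneg t) hp.le)]

theorem CAT0Space.dist_sq_le {X : Type*} [MetricSpace X] (hX : CAT0Space X) {x y z : X}
    {g₁ g₂ : ℝ → X}
    (h₁ : IsGeodesicOn g₁ 0 (dist x y)) (h₁0 : g₁ 0 = x) (h₁1 : g₁ (dist x y) = y)
    (h₂ : IsGeodesicOn g₂ 0 (dist x z)) (h₂0 : g₂ 0 = x) (h₂1 : g₂ (dist x z) = z)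
    {t : ℝ} (ht : 0 ≤ t) (hty : t ≤ dist x y) (htz : t ≤ dist x z) :
    dist (g₁ t) (g₂ t) ^ 2 ≤ 2 * t ^ 2 * (dist x y + dist y z - dist x z) / dist x y := by
  rcases ht.eq_or_lt with rfl | ht
  · simp [h₁0, h₂0]
  rw [dist_comm x z] at h₂ h₂1 htz ⊢
  obtain ⟨S, hS⟩ := hX.1 y z
  obtain ⟨g, hg, hg0, hg1, -⟩ := hS.exists_isGeodesicOn
  obtain ⟨a, b, c, hab, hbc, hca⟩ := exists_comparison_triangle z (dist_pos.1 (ht.trans_le hty))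
  have hcmp := (hX.2 x y z g₁ g (fun s => g₂ (dist z x - s)) h₁ h₁0 h₁1 hg hg0 hg1 h₂.reverse
    (by simpa using h₂1) (by simpa using h₂0) a b c hab hbc hca).2.2 (dist z x - t)
    ⟨by linarith, by linarith⟩ t ⟨ht.le, hty⟩
  rw [sub_sub_cancel, dist_comm] at hcmp
  exact (pow_le_pow_left₀ dist_nonneg hcmp 2).trans
    (dist_cmpPt_sq_le (ht.trans_le hty) (ht.trans_le htz) hab hbc hca)

namespace IsDirectionalSeq

variable {X : Type*} [MetricSpace X] {x : ℕ → X}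

theorem exists_dist_add_dist_le (hx : IsDirectionalSeq x) :
    ∃ b : ℝ, ∀ m n, 0 < m → m < n → dist (x 0) (x m) + dist (x m) (x n) - b ≤ dist (x 0) (x n) := by
  obtain ⟨-, b, -, hb⟩ := hx
  refine ⟨b, fun m n hm hmn => ?_⟩
  have hmono : StrictMono ![0, m, n] := by
    rw [Fin.strictMono_iff_lt_succ]
    intro i
    fin_cases i <;> simp [hm, hmn]
  simpa [Fin.sum_univ_two, Fin.last] using hb 2 ![0, m, n] hmono

theorem cauchySeq_apply (hX : CAT0Space X) (hx : IsDirectionalSeq x) {g : ℕ → ℝ → X}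
    (hg : ∀ n, IsGeodesicOn (g n) 0 (dist (x 0) (x n))) (hg0 : ∀ n, g n 0 = x 0)
    (hg1 : ∀ n, g n (dist (x 0) (x n)) = x n) {t : ℝ} (ht : 0 ≤ t) :
    CauchySeq fun n => g n t := by
  obtain ⟨b, hb⟩ := hx.exists_dist_add_dist_le
  have hsmall : Tendsto (fun N => 2 * t ^ 2 * b / dist (x 0) (x N)) atTop (𝓝 0) :=
    tendsto_const_nhds.div_atTop hx.1
  obtain ⟨N₀, hN₀⟩ := eventually_atTop.1 (hx.1.eventually_ge_atTop t)
  rw [Metric.cauchySeq_iff']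
  intro ε hε
  obtain ⟨N, hNε, hN₀N, hN⟩ := ((hsmall.eventually (gt_mem_nhds (pow_pos hε 2))).and
    ((eventually_ge_atTop N₀).and (eventually_gt_atTop 0))).exists
  refine ⟨N, fun n hn => ?_⟩
  rcases hn.eq_or_lt with rfl | hNn
  · simpa using hε
  have hdist := hX.dist_sq_le (hg N) (hg0 N) (hg1 N) (hg n) (hg0 n) (hg1 n) ht (hN₀ N hN₀N)
    (hN₀ n (hN₀N.trans hNn.le))
  rw [dist_comm]
  refine lt_of_pow_lt_pow_left₀ 2 hε.le (hdist.trans_lt (lt_of_le_of_lt ?_ hNε))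
  gcongr
  linarith [hb N n hN hNn]

end IsDirectionalSeq

theorem stmt2 {X : Type*} [MetricSpace X] [CompleteSpace X] (hX : CAT0Space X)
    (A : Set X) (hclosed : IsClosed A) (hconv : GeodesicConvex A)
    (x : ℕ → X) (hxA : ∀ n, x n ∈ A) (hdir : IsDirectionalSeq x) :
    ∃ γ : ℝ → X, IsGeodesicRay γ ∧ ∀ t ∈ Set.Ici (0:ℝ), γ t ∈ A := by
  have : Nonempty X := ⟨x 0⟩
  choose g hg hg0 hg1 hgA using fun n => hconv.exists_isGeodesicOn hX.1 (hxA 0) (hxA n)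
  set γ : ℝ → X := fun t => limUnder atTop fun n => g n t
  have hγ : ∀ t ∈ Ici (0 : ℝ), Tendsto (fun n => g n t) atTop (𝓝 (γ t)) :=
    fun t ht => (hdir.cauchySeq_apply hX hg hg0 hg1 ht).tendsto_limUnder
  refine ⟨γ, isGeodesicRay_of_tendsto hg hdir.1 hγ, fun t ht => hclosed.mem_of_tendsto (hγ t ht) ?_⟩
  filter_upwards [hdir.1.eventually_ge_atTop t] with n hn using hgA n ⟨ht, hn⟩
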